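/- arXiv:2310.10448 — 2 statements merged into one kernel-verified Lean document; each statement's English description precedes it below -/
import Mathlib

section
/- Let G be a compact topological group with its (bi-invariant) Haar probability measure μ, V a finite-dimensional normed complex vector space, and ρ : G → GL(V) a representation such that g ↦ ρ(g)⁻¹ v is continuous for every v ∈ V. Let P be a set with a right G-action, k : P × P → ℝ a kernel invariant under the diagonal action, i.e. k(p · g, q · g) = k(p, q) for all p, q ∈ P and g ∈ G, and assume g ↦ k(p, q · g) is continuous for all p, q. Let J be a finite index set, (p_j)_{j∈J} points of P, and (w_j)_{j∈J} ∈ V. Define the message m : P → V by m(p) := ∫_G ∑_{j∈J} k(p, p_j · g) ρ(g)⁻¹ w_j dμ(g). Then m is (ρ,G)-equivariant: for all p ∈ P and g₀ ∈ G, m(p · g₀) = ρ(g₀)⁻¹ m(p). -/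
open MeasureTheory

/-! Substituting `g ↦ g * g₀` in the integral defining `m (p · g₀)`, diagonal invariance of `k`
turns each kernel value into `k p (pⱼ · g)`, while `ρ(g * g₀)⁻¹ = ρ(g₀)⁻¹ ρ(g)⁻¹` pulls
`ρ(g₀)⁻¹` out of every summand. Being an invertible linear map of a finite-dimensional space,
`ρ(g₀)⁻¹` is a continuous linear equivalence, so it commutes with the Bochner integral. -/

theorem integral_eq_apply_integral_of_mul_right {G 𝕜 E F : Type*} [Group G] [MeasurableSpace G]
    [MeasurableMul G] {μ : Measure G} [μ.IsMulRightInvariant] [RCLike 𝕜]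
    [NormedAddCommGroup E] [NormedSpace ℝ E] [NormedSpace 𝕜 E]
    [NormedAddCommGroup F] [NormedSpace ℝ F] [NormedSpace 𝕜 F]
    (L : E ≃L[𝕜] F) {f : G → E} {f' : G → F} (g₀ : G) (h : ∀ g, f' (g * g₀) = L (f g)) :
    ∫ g, f' g ∂μ = L (∫ g, f g ∂μ) := by
  rw [← integral_mul_right_eq_self f' g₀]
  simp_rw [h]
  exact L.integral_comp_comm f

theorem kernel_smul_inv_apply_act_mul_right {G P V : Type*} [Group G] [AddCommGroup V]
    [Module ℂ V] (ρ : G →* LinearMap.GeneralLinearGroup ℂ V) (act : P → G → P)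
    (act_mul : ∀ p g₁ g₂, act p (g₁ * g₂) = act (act p g₁) g₂) (k : P → P → ℝ)
    (hkinv : ∀ (p q : P) (g : G), k (act p g) (act q g) = k p q) (p q : P) (v : V) (g g₀ : G) :
    k (act p g₀) (act q (g * g₀)) • (↑(ρ (g * g₀))⁻¹ : V →ₗ[ℂ] V) v
      = (↑(ρ g₀)⁻¹ : V →ₗ[ℂ] V) (k p (act q g) • (↑(ρ g)⁻¹ : V →ₗ[ℂ] V) v) := by
  rw [act_mul, hkinv, map_mul, mul_inv_rev, Units.val_mul, Module.End.mul_apply,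
    LinearMap.map_smul_of_tower]

theorem stmt_10_general {G P V J : Type*} [Group G] [TopologicalSpace G]
    [IsTopologicalGroup G] [MeasurableSpace G] [BorelSpace G]
    [NormedAddCommGroup V] [NormedSpace ℂ V] [FiniteDimensional ℂ V]
    [Fintype J]
    (μ : Measure G)
    [μ.IsMulRightInvariant]
    (ρ : G →* LinearMap.GeneralLinearGroup ℂ V)
    (act : P → G → P)
    (act_mul : ∀ p g₁ g₂, act p (g₁ * g₂) = act (act p g₁) g₂)
    (k : P → P → ℝ)
    (hkinv : ∀ (p q : P) (g : G), k (act p g) (act q g) = k p q)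
    (pj : J → P) (w : J → V)
    (m : P → V)
    (hm : ∀ p : P,
      m p = ∫ g, (∑ j : J, k p (act (pj j) g) • (↑(ρ g)⁻¹ : V →ₗ[ℂ] V) (w j)) ∂μ)
    (p : P) (g₀ : G) :
    m (act p g₀) = (↑(ρ g₀)⁻¹ : V →ₗ[ℂ] V) (m p) := by
  rw [hm, hm]
  refine integral_eq_apply_integral_of_mul_right (ρ g₀)⁻¹.toLinearEquiv.toContinuousLinearEquiv
    g₀ fun g => ?_
  rw [LinearEquiv.coe_toContinuousLinearEquiv', LinearMap.GeneralLinearGroup.coe_toLinearEquiv,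
    map_sum]
  exact Finset.sum_congr rfl fun j _ =>
    kernel_smul_inv_apply_act_mul_right ρ act act_mul k hkinv p (pj j) (w j) g g₀

/-- Let `G` be a compact topological group with bi-invariant
Haar probability measure `μ`, `V` a finite-dimensional normed complex vector
space, `ρ : G → GL(V)` a representation with `g ↦ ρ(g)⁻¹ v` continuous, `P` a
set with a right `G`-action, and `k : P × P → ℝ` a diagonally invariant kernel
(`k (p·g) (q·g) = k p q`) with `g ↦ k p (q·g)` continuous.  For finitely many
points `pⱼ ∈ P` and vectors `wⱼ ∈ V`, the message
`m p = ∫_G ∑ⱼ k p (pⱼ·g) • ρ(g)⁻¹ wⱼ dμ(g)` is `(ρ,G)`-equivariant: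
`m (p·g₀) = ρ(g₀)⁻¹ (m p)`. -/
theorem stmt_10 {G P V J : Type*} [Group G] [TopologicalSpace G]
    [IsTopologicalGroup G] [CompactSpace G] [MeasurableSpace G] [BorelSpace G]
    [NormedAddCommGroup V] [NormedSpace ℂ V] [FiniteDimensional ℂ V]
    [Fintype J]
    (μ : Measure G) [μ.IsHaarMeasure] [IsProbabilityMeasure μ]
    [μ.IsMulRightInvariant]
    (ρ : G →* LinearMap.GeneralLinearGroup ℂ V)
    (hρ : ∀ v : V, Continuous fun g : G => (↑(ρ g)⁻¹ : V →ₗ[ℂ] V) v)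
    (act : P → G → P)
    (act_one : ∀ p, act p 1 = p)
    (act_mul : ∀ p g₁ g₂, act p (g₁ * g₂) = act (act p g₁) g₂)
    (k : P → P → ℝ)
    (hkinv : ∀ (p q : P) (g : G), k (act p g) (act q g) = k p q)
    (hkcont : ∀ p q : P, Continuous fun g : G => k p (act q g))
    (pj : J → P) (w : J → V)
    (m : P → V)
    (hm : ∀ p : P,
      m p = ∫ g, (∑ j : J, k p (act (pj j) g) • (↑(ρ g)⁻¹ : V →ₗ[ℂ] V) (w j)) ∂μ)
    (p : P) (g₀ : G) :
    m (act p g₀) = (↑(ρ g₀)⁻¹ : V →ₗ[ℂ] V) (m p) :=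
  stmt_10_general μ ρ act act_mul k hkinv pj w m hm p g₀
end

section
/- Let G be a compact topological group with Haar probability measure μ, V a finite-dimensional normed complex vector space, ρ : G → GL(V) a representation such that g ↦ ρ(g)⁻¹ v is continuous for every v ∈ V, P a set with a right G-action, and k : P × P → ℝ a diagonally invariant kernel (k(p·g, q·g) = k(p,q)) with g ↦ k(p, q·g) continuous. Let n ≥ 1, let J be a finite index set with points (p_j)_{j∈J} of P and vectors (w_j)_{j∈J} in V, and define the higher-order message m : P → V^{⊗n} by m(p) := ∫_G (ρ(g)⁻¹)^{⊗n} ( ⊗_{ξ=1}^{n} ( ∑_{j∈J} k(p, p_j · g) w_j ) ) dμ(g), where (ρ(g)⁻¹)^{⊗n} acts on V^{⊗n} as the n-fold tensor power. Then m is equivariant for the tensor power representation: for all p ∈ P and g₀ ∈ G, m(p · g₀) = (ρ(g₀)⁻¹)^{⊗n} m(p). -/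
/-! Diagonal invariance of `k` gives `k (p·g₀) (q·g g₀) = k p (q·g)`, so the substitution
`g ↦ g g₀`, which preserves the right-invariant measure `μ`, turns the integrand of
`m (p·g₀)` into `(ρ(g₀)⁻¹)^⊗n` applied to the integrand of `m p`. That operator is a
continuous linear map on the finite-dimensional space `T` and so commutes with the
Bochner integral. -/

open MeasureTheory

theorem MultilinearMap.continuous_of_finiteDimensional {𝕜 ι F : Type*} {E : ι → Type*}
    [NontriviallyNormedField 𝕜] [CompleteSpace 𝕜] [Fintype ι]
    [∀ i, NormedAddCommGroup (E i)] [∀ i, NormedSpace 𝕜 (E i)]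
    [∀ i, FiniteDimensional 𝕜 (E i)]
    [NormedAddCommGroup F] [NormedSpace 𝕜 F] (f : MultilinearMap 𝕜 E F) : Continuous f := by
  classical
  let b i := Module.finBasis 𝕜 (E i)
  have expand : ⇑f = fun x => ∑ r : ∀ i, Fin (Module.finrank 𝕜 (E i)),
      (∏ i, (b i).coord (r i) (x i)) • f fun i => b i (r i) := by
    funext x
    conv_lhs => rw [← funext fun i => (b i).sum_repr (x i), f.map_sum]
    exact Finset.sum_congr rfl fun r _ => f.map_smul_univ _ _
  rw [expand]
  refine continuous_finsetSum _ fun r _ => Continuous.smul ?_ continuous_const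
  exact continuous_finsetProd _ fun i _ =>
    ((b i).coord (r i)).continuous_of_finiteDimensional.comp (continuous_apply i)

theorem integral_mul_right_eq_clm_integral {G 𝕜 E F : Type*} [Group G] [MeasurableSpace G]
    [MeasurableMul G] {μ : Measure G} [μ.IsMulRightInvariant] [RCLike 𝕜]
    [NormedAddCommGroup E] [NormedSpace 𝕜 E] [NormedSpace ℝ E] [CompleteSpace E]
    [NormedAddCommGroup F] [NormedSpace 𝕜 F] [NormedSpace ℝ F] [CompleteSpace F]
    (A : E →L[𝕜] F) {f : G → E} {f' : G → F} (g₀ : G) (hf : Integrable f μ)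
    (h : ∀ g, f' (g * g₀) = A (f g)) : ∫ g, f' g ∂μ = A (∫ g, f g ∂μ) := by
  rw [← integral_mul_right_eq_self f' g₀, ← A.integral_comp_comm hf]
  simp only [h]

theorem kernel_act_mul_right {G P β : Type*} [Mul G] {act : P → G → P}
    (act_mul : ∀ p g₁ g₂, act p (g₁ * g₂) = act (act p g₁) g₂) {k : P → P → β}
    (hkinv : ∀ (p q : P) (g : G), k (act p g) (act q g) = k p q) (p q : P) (g g₀ : G) :
    k (act p g₀) (act q (g * g₀)) = k p (act q g) := by
  rw [act_mul, hkinv]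

theorem stmt_11_general {G P V T J : Type*} [Group G] [TopologicalSpace G]
    [IsTopologicalGroup G] [CompactSpace G] [MeasurableSpace G] [BorelSpace G]
    [NormedAddCommGroup V] [NormedSpace ℂ V] [FiniteDimensional ℂ V]
    [NormedAddCommGroup T] [NormedSpace ℂ T] [FiniteDimensional ℂ T]
    [Fintype J]
    (n : ℕ)
    (e : PiTensorProduct ℂ (fun _ : Fin n => V) ≃ₗ[ℂ] T)
    (μ : Measure G) [IsProbabilityMeasure μ]
    [μ.IsMulRightInvariant]
    (ρ : G →* LinearMap.GeneralLinearGroup ℂ V)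
    (hρ : ∀ v : V, Continuous fun g : G => (↑(ρ g)⁻¹ : V →ₗ[ℂ] V) v)
    (act : P → G → P)
    (act_mul : ∀ p g₁ g₂, act p (g₁ * g₂) = act (act p g₁) g₂)
    (k : P → P → ℝ)
    (hkinv : ∀ (p q : P) (g : G), k (act p g) (act q g) = k p q)
    (hkcont : ∀ p q : P, Continuous fun g : G => k p (act q g))
    (pj : J → P) (w : J → V)
    (m : P → T)
    (hm : ∀ p : P,
      m p = ∫ g, e
        ((PiTensorProduct.map fun _ : Fin n => (↑(ρ g)⁻¹ : V →ₗ[ℂ] V))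
          (PiTensorProduct.tprod ℂ
            fun _ : Fin n => ∑ j : J, k p (act (pj j) g) • w j)) ∂μ)
    (p : P) (g₀ : G) :
    m (act p g₀) =
      e ((PiTensorProduct.map fun _ : Fin n => (↑(ρ g₀)⁻¹ : V →ₗ[ℂ] V))
        (e.symm (m p))) := by
  set u : P → G → V := fun q g =>
    (↑(ρ g)⁻¹ : V →ₗ[ℂ] V) (∑ j, k q (act (pj j) g) • w j)
  have hm_u : ∀ q, m q = ∫ g, e (PiTensorProduct.tprod ℂ fun _ : Fin n => u q g) ∂μ := by
    simpa only [PiTensorProduct.map_tprod] using hm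
  have hu_cont : Continuous (u p) := by
    simp only [u, map_sum, LinearMap.map_smul_of_tower]
    exact continuous_finsetSum _ fun j _ => (hkcont p (pj j)).smul (hρ (w j))
  have hu_shift : ∀ g,
      u (act p g₀) (g * g₀) = (↑(ρ g₀)⁻¹ : V →ₗ[ℂ] V) (u p g) := by
    intro g
    simp only [u, kernel_act_mul_right act_mul hkinv, map_mul, mul_inv_rev]
    rfl
  have h_int : Integrable (fun g => e (PiTensorProduct.tprod ℂ fun _ : Fin n => u p g)) μ :=
    have h_tprod := (e.toLinearMap.compMultilinearMap
      (PiTensorProduct.tprod ℂ)).continuous_of_finiteDimensional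
    (h_tprod.comp (continuous_pi fun _ => hu_cont)).integrable_of_hasCompactSupport
      (HasCompactSupport.of_compactSpace _)
  let A : T →L[ℂ] T := LinearMap.toContinuousLinearMap (e.toLinearMap ∘ₗ
    PiTensorProduct.map (fun _ : Fin n => (↑(ρ g₀)⁻¹ : V →ₗ[ℂ] V)) ∘ₗ e.symm.toLinearMap)
  rw [hm_u, hm_u]
  refine integral_mul_right_eq_clm_integral A g₀ h_int fun g => ?_
  simp [A, hu_shift, PiTensorProduct.map_tprod]

/-- Let `G` be a compact topological group with bi-invariant
Haar probability measure `μ`, `V` a finite-dimensional normed complex vector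
space with `n`-th tensor power `V^⊗n` (read in a finite-dimensional normed
model `T ≃ₗ V^⊗n`), `ρ : G → GL(V)` a representation with `g ↦ ρ(g)⁻¹ v`
continuous, `P` a set with a right `G`-action, and `k : P × P → ℝ` a diagonally
invariant kernel with `g ↦ k p (q·g)` continuous.  For `n ≥ 1`, finitely many
points `pⱼ ∈ P` and vectors `wⱼ ∈ V`, the higher-order message
`m p = ∫_G (ρ(g)⁻¹)^⊗n (⊗_{ξ=1}^n ∑ⱼ k p (pⱼ·g) wⱼ) dμ(g)` is equivariant for
the tensor power representation: `m (p·g₀) = (ρ(g₀)⁻¹)^⊗n (m p)`. -/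
theorem stmt_11 {G P V T J : Type*} [Group G] [TopologicalSpace G]
    [IsTopologicalGroup G] [CompactSpace G] [MeasurableSpace G] [BorelSpace G]
    [NormedAddCommGroup V] [NormedSpace ℂ V] [FiniteDimensional ℂ V]
    [NormedAddCommGroup T] [NormedSpace ℂ T] [FiniteDimensional ℂ T]
    [Fintype J]
    (n : ℕ) (hn : 1 ≤ n)
    (e : PiTensorProduct ℂ (fun _ : Fin n => V) ≃ₗ[ℂ] T)
    (μ : Measure G) [μ.IsHaarMeasure] [IsProbabilityMeasure μ]
    [μ.IsMulRightInvariant]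
    (ρ : G →* LinearMap.GeneralLinearGroup ℂ V)
    (hρ : ∀ v : V, Continuous fun g : G => (↑(ρ g)⁻¹ : V →ₗ[ℂ] V) v)
    (act : P → G → P)
    (act_one : ∀ p, act p 1 = p)
    (act_mul : ∀ p g₁ g₂, act p (g₁ * g₂) = act (act p g₁) g₂)
    (k : P → P → ℝ)
    (hkinv : ∀ (p q : P) (g : G), k (act p g) (act q g) = k p q)
    (hkcont : ∀ p q : P, Continuous fun g : G => k p (act q g))
    (pj : J → P) (w : J → V)
    (m : P → T)
    (hm : ∀ p : P,
      m p = ∫ g, e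
        ((PiTensorProduct.map fun _ : Fin n => (↑(ρ g)⁻¹ : V →ₗ[ℂ] V))
          (PiTensorProduct.tprod ℂ
            fun _ : Fin n => ∑ j : J, k p (act (pj j) g) • w j)) ∂μ)
    (p : P) (g₀ : G) :
    m (act p g₀) =
      e ((PiTensorProduct.map fun _ : Fin n => (↑(ρ g₀)⁻¹ : V →ₗ[ℂ] V))
        (e.symm (m p))) :=
  stmt_11_general n e μ ρ hρ act act_mul k hkinv hkcont pj w m hm p g₀
end
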